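/- arXiv:1810.06444 — 2 statements merged into one kernel-verified Lean document; each statement's English description precedes it below -/
import Mathlib

section
/- For f = (y³+x⁷)(y³+x¹⁰) ∈ ℂ[x,y], the Tjurina number τ(f) = dim_ℂ ℂ[[x,y]]/⟨f, ∂f/∂x, ∂f/∂y⟩ equals 59. -/
noncomputable section

/-- The formal power series ring ℂ[[x,y]]. -/
abbrev R2 := MvPowerSeries (Fin 2) ℂ

/-- Partial derivative of a formal power series in two variables. -/
def pder (i : Fin 2) (f : R2) : R2 :=
  fun d => ((d i : ℕ) + 1 : ℂ) * MvPowerSeries.coeff (d + Finsupp.single i 1) f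

/-- The maximal ideal 𝔪 = ⟨x,y⟩ of ℂ[[x,y]]. -/
def mIdeal : Ideal R2 := Ideal.span {MvPowerSeries.X 0, MvPowerSeries.X 1}

/-- dim_ℂ B/A for ideals A ⊆ B of ℂ[[x,y]]. -/
def qdim (A B : Ideal R2) : ℕ :=
  Module.finrank ℂ ((B.map (Ideal.Quotient.mk A)).restrictScalars ℂ)
/-- f = (y³+x⁷)(y³+x¹⁰) ∈ ℂ[[x,y]]. -/
def fEx : R2 :=
  (MvPowerSeries.X 1 ^ 3 + MvPowerSeries.X 0 ^ 7) *
  (MvPowerSeries.X 1 ^ 3 + MvPowerSeries.X 0 ^ 10)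

/-!
Let `J = ⟨f, f_x, f_y⟩`. The combination `102 f - 6x f_x - 17y f_y = 9x⁷y³(1 - x³)` puts `x⁷y³`
in `J`, and then `y⁶`, `x¹⁷` and `x¹³y²` follow. Modulo these monomials, `f_y` rewrites `x^a y⁵`
and `f_x` rewrites `x^a y³`, `x^a y⁴` (`a ≥ 6`) in terms of lower powers of `y`, so the 59
monomials `x^a y^b` with `b ≤ 1, a ≤ 16`, or `b = 2, a ≤ 12`, or `b ∈ {3, 4}, a ≤ 5` span
`ℂ[[x,y]]/J`. They are independent: the coefficients of the normal form modulo `J` are linear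
functionals that vanish on `J` and are dual to these monomials.
-/

namespace MvPowerSeries

theorem mem_ideal_of_forall_coeff_ne_zero_exists_le {σ R : Type*} [CommRing R]
    {I : Ideal (MvPowerSeries σ R)} (E : Finset (σ →₀ ℕ)) (hE : ∀ e ∈ E, monomial e 1 ∈ I)
    (φ : MvPowerSeries σ R) (hφ : ∀ d, coeff d φ ≠ 0 → ∃ e ∈ E, e ≤ d) : φ ∈ I := by
  classical
  induction E using Finset.induction_on generalizing φ with
  | empty =>
    have : φ = 0 := ext fun d => by simpa using mt (hφ d)
    simp [this]
  | insert e E _ ih =>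
    let ψ : MvPowerSeries σ R := fun d => coeff (d + e) φ
    have hψ_coeff : ∀ d, coeff d ψ = coeff (d + e) φ := fun _ => rfl
    have hψ : monomial e 1 * ψ ∈ I := I.mul_mem_right _ (hE e (by simp))
    have hrest : φ - monomial e 1 * ψ ∈ I := by
      refine ih (fun e' he' => hE e' (by simp [he'])) _ fun d hd => ?_
      rw [map_sub, coeff_monomial_mul, one_mul] at hd
      split_ifs at hd with hed
      · rw [hψ_coeff, tsub_add_cancel_of_le hed, sub_self] at hd
        exact absurd rfl hd
      · obtain ⟨e', he', hle⟩ := hφ d (by simpa using hd)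
        rcases Finset.mem_insert.mp he' with rfl | h
        · exact absurd hle hed
        · exact ⟨e', h, hle⟩
    simpa using add_mem hrest hψ

theorem sub_trunc'_mem {σ R : Type*} [Fintype σ] [DecidableEq σ] [CommRing R]
    {I : Ideal (MvPowerSeries σ R)} (n : σ →₀ ℕ) (hI : ∀ i, X i ^ (n i + 1) ∈ I)
    (φ : MvPowerSeries σ R) : φ - trunc' R n φ ∈ I := by
  refine mem_ideal_of_forall_coeff_ne_zero_exists_le
    (Finset.univ.image fun i => Finsupp.single i (n i + 1)) ?_ _ fun d hd => ?_
  · simp only [Finset.mem_image, Finset.mem_univ, true_and, forall_exists_index,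
      forall_apply_eq_imp_iff, ← X_pow_eq]
    exact hI
  rw [map_sub, MvPolynomial.coeff_coe, coeff_trunc'] at hd
  split_ifs at hd with hdn
  · simp at hd
  · obtain ⟨i, hi⟩ : ∃ i, n i < d i := by simpa [Finsupp.le_def] using hdn
    exact ⟨_, Finset.mem_image_of_mem _ (Finset.mem_univ i), Finsupp.single_le_iff.mpr hi⟩

theorem coe_mem_of_forall_monomial_mem {σ R : Type*} [CommSemiring R]
    {V : Submodule R (MvPowerSeries σ R)} (hV : ∀ d, monomial d 1 ∈ V) (p : MvPolynomial σ R) :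
    (p : MvPowerSeries σ R) ∈ V := by
  induction p using MvPolynomial.induction_on' with
  | monomial d a =>
    rw [MvPolynomial.coe_monomial, ← mul_one a, ← smul_eq_mul, map_smul]
    exact V.smul_mem a (hV d)
  | add p q hp hq => rw [MvPolynomial.coe_add]; exact V.add_mem hp hq

theorem mem_of_mul_mem_of_constantCoeff_ne_zero {σ k : Type*} [Field k]
    {I : Ideal (MvPowerSeries σ k)} {z u : MvPowerSeries σ k} (hu : constantCoeff u ≠ 0)
    (h : z * u ∈ I) : z ∈ I :=
  (I.mul_unit_mem_iff_mem (isUnit_iff_constantCoeff.mpr hu.isUnit)).mp h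

end MvPowerSeries

theorem LinearMap.map_eq_zero_of_mem_ideal_span {R A M : Type*} [CommSemiring R]
    [CommSemiring A] [Algebra R A] [AddCommMonoid M] [Module R M] (φ : A →ₗ[R] M) {s : Set A}
    (hs : ∀ g ∈ s, ∀ p, φ (p * g) = 0) {z : A} (hz : z ∈ Ideal.span s) : φ z = 0 := by
  suffices ∀ p, φ (p * z) = 0 by simpa using this 1
  induction hz using Submodule.span_induction with
  | mem g hg => exact hs g hg
  | zero => simp
  | add x y _ _ hx hy => intro p; rw [mul_add, map_add, hx, hy, add_zero]
  | smul r x _ hx => intro p; rw [smul_eq_mul, ← mul_assoc]; exact hx _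

theorem finsupp_fin_two_eq_iff {M : Type*} [Zero M] {d e : Fin 2 →₀ M} :
    d = e ↔ d 0 = e 0 ∧ d 1 = e 1 := by
  simp [Finsupp.ext_iff, Fin.forall_fin_two]

namespace Tjurina

open MvPowerSeries

def mono (a b : ℕ) : R2 := X 0 ^ a * X 1 ^ b

theorem mono_eq_monomial (a b : ℕ) :
    mono a b = monomial (Finsupp.single 0 a + Finsupp.single 1 b) 1 := by
  rw [mono, X_pow_eq, X_pow_eq, monomial_mul_monomial, one_mul]

theorem monomial_one_eq_mono (d : Fin 2 →₀ ℕ) : monomial d 1 = mono (d 0) (d 1) := by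
  have hd : d = Finsupp.single 0 (d 0) + Finsupp.single 1 (d 1) :=
    finsupp_fin_two_eq_iff.mpr ⟨by simp, by simp⟩
  rw [mono_eq_monomial, ← hd]

theorem mono_mul_mono (a b c d : ℕ) : mono a b * mono c d = mono (a + c) (b + d) := by
  simp only [mono]; ring

theorem mono_mem_of_le {I : Ideal R2} {u v a b : ℕ} (h : mono u v ∈ I) (hu : u ≤ a)
    (hv : v ≤ b) : mono a b ∈ I := by
  rw [← Nat.sub_add_cancel hu, ← Nat.sub_add_cancel hv, ← mono_mul_mono]
  exact I.mul_mem_left _ h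

theorem pder_add (i : Fin 2) (f g : R2) : pder i (f + g) = pder i f + pder i g := by
  ext d
  rw [map_add]
  change _ * coeff _ (f + g) = _ * coeff _ f + _ * coeff _ g
  rw [map_add, mul_add]

theorem pder_zero_mono (a b : ℕ) : pder 0 (mono a b) = (a : R2) * mono (a - 1) b := by
  ext d
  rw [← map_natCast (C (σ := Fin 2)), coeff_C_mul, mono_eq_monomial, mono_eq_monomial,
    coeff_monomial, coeff_apply, pder, coeff_monomial]
  simp only [finsupp_fin_two_eq_iff, Finsupp.add_apply, Finsupp.single_apply]
  split_ifs <;> simp_all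
  all_goals first | (exfalso; omega) | (norm_cast <;> omega)

theorem pder_one_mono (a b : ℕ) : pder 1 (mono a b) = (b : R2) * mono a (b - 1) := by
  ext d
  rw [← map_natCast (C (σ := Fin 2)), coeff_C_mul, mono_eq_monomial, mono_eq_monomial,
    coeff_monomial, coeff_apply, pder, coeff_monomial]
  simp only [finsupp_fin_two_eq_iff, Finsupp.add_apply, Finsupp.single_apply]
  split_ifs <;> simp_all
  all_goals first | (exfalso; omega) | (norm_cast <;> omega)

theorem fEx_eq : fEx = mono 0 6 + mono 7 3 + mono 10 3 + mono 17 0 := by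
  simp only [fEx, mono]; ring

theorem pder_zero_fEx : pder 0 fEx = 7 * mono 6 3 + 10 * mono 9 3 + 17 * mono 16 0 := by
  simp only [fEx_eq, pder_add, pder_zero_mono]
  norm_num

theorem pder_one_fEx : pder 1 fEx = 6 * mono 0 5 + 3 * mono 7 2 + 3 * mono 10 2 := by
  simp only [fEx_eq, pder_add, pder_one_mono]
  norm_num

def tjurinaIdeal : Ideal R2 := Ideal.span {fEx, pder 0 fEx, pder 1 fEx}

local notation "J" => tjurinaIdeal

theorem fEx_mem : fEx ∈ J := Ideal.subset_span (by simp)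

theorem pder_zero_fEx_mem : pder 0 fEx ∈ J := Ideal.subset_span (by simp)

theorem pder_one_fEx_mem : pder 1 fEx ∈ J := Ideal.subset_span (by simp)

theorem mono_7_3_mem : mono 7 3 ∈ J := by
  refine mem_of_mul_mem_of_constantCoeff_ne_zero (u := 9 - 9 * X 0 ^ 3) (by simp [map_ofNat]) ?_
  have key : mono 7 3 * (9 - 9 * X 0 ^ 3) =
      102 * fEx - 6 * X 0 * pder 0 fEx - 17 * X 1 * pder 1 fEx := by
    rw [pder_zero_fEx, pder_one_fEx, fEx_eq]; simp only [mono]; ring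
  rw [key]
  apply_rules [fEx_mem, pder_zero_fEx_mem, pder_one_fEx_mem, sub_mem, Ideal.mul_mem_left]

theorem mono_0_6_mem : mono 0 6 ∈ J := by
  refine mem_of_mul_mem_of_constantCoeff_ne_zero (u := 9) (by simp [map_ofNat]) ?_
  have key : mono 0 6 * 9 =
      51 * fEx - 3 * X 0 * pder 0 fEx - 7 * X 1 * pder 1 fEx - 9 * mono 7 3 := by
    rw [pder_zero_fEx, pder_one_fEx, fEx_eq]; simp only [mono]; ring
  rw [key]
  apply_rules [fEx_mem, pder_zero_fEx_mem, pder_one_fEx_mem, mono_7_3_mem, sub_mem,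
    Ideal.mul_mem_left]

theorem mono_17_0_mem : mono 17 0 ∈ J := by
  have key : mono 17 0 = fEx - mono 0 6 - (1 + X 0 ^ 3) * mono 7 3 := by
    rw [fEx_eq]; simp only [mono]; ring
  rw [key]
  apply_rules [fEx_mem, mono_0_6_mem, mono_7_3_mem, sub_mem, Ideal.mul_mem_left]

theorem mono_13_2_mem : mono 13 2 ∈ J := by
  refine mem_of_mul_mem_of_constantCoeff_ne_zero (u := 81 * X 0 ^ 3 - 21)
    (by simp [map_ofNat]) ?_
  have key : mono 13 2 * (81 * X 0 ^ 3 - 21) = 6 * X 1 ^ 2 * pder 0 fEx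
      - 7 * X 0 ^ 6 * pder 1 fEx - 60 * X 0 ^ 2 * X 1 ^ 2 * mono 7 3 := by
    rw [pder_zero_fEx, pder_one_fEx]; simp only [mono]; ring
  rw [key]
  apply_rules [pder_zero_fEx_mem, pder_one_fEx_mem, mono_7_3_mem, sub_mem, Ideal.mul_mem_left]

def basisIndex : Finset (ℕ × ℕ) :=
  (Finset.range 17 ×ˢ Finset.range 5).filter fun q => q.2 ≤ 1 ∨ q.1 ≤ 5 ∨ (q.2 = 2 ∧ q.1 ≤ 12)

theorem mem_basisIndex {a b : ℕ} :
    (a, b) ∈ basisIndex ↔ a ≤ 16 ∧ b ≤ 4 ∧ (b ≤ 1 ∨ a ≤ 5 ∨ (b = 2 ∧ a ≤ 12)) := by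
  simp only [basisIndex, Finset.mem_filter, Finset.mem_product, Finset.mem_range]
  omega

theorem card_basisIndex : basisIndex.card = 59 := by decide

def monomialClass (q : basisIndex) : R2 ⧸ J := Ideal.Quotient.mkₐ ℂ J (mono q.1.1 q.1.2)

def basisSpan : Submodule ℂ R2 :=
  (Submodule.span ℂ (Set.range monomialClass)).comap (Ideal.Quotient.mkₐ ℂ J).toLinearMap

theorem mem_basisSpan_of_mem {z : R2} (hz : z ∈ J) : z ∈ basisSpan := by
  simp [basisSpan, Ideal.Quotient.eq_zero_iff_mem.mpr hz]

theorem mono_mem_basisSpan_of_mem {a b : ℕ} (h : (a, b) ∈ basisIndex) : mono a b ∈ basisSpan :=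
  Submodule.subset_span ⟨⟨(a, b), h⟩, rfl⟩

theorem ofNat_mul_mem_basisSpan_iff {z : R2} (n : ℕ) [n.AtLeastTwo] :
    OfNat.ofNat n * z ∈ basisSpan ↔ z ∈ basisSpan := by
  rw [← map_ofNat C, ← smul_eq_C_mul]
  exact basisSpan.smul_mem_iff (NeZero.ne _)

theorem mono_mem_basisSpan_of_le_two {a b : ℕ} (hb : b ≤ 2) : mono a b ∈ basisSpan := by
  by_cases h : (a, b) ∈ basisIndex
  · exact mono_mem_basisSpan_of_mem h
  rw [mem_basisIndex] at h
  obtain hb | rfl : b < 2 ∨ b = 2 := by omega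
  · exact mem_basisSpan_of_mem (mono_mem_of_le mono_17_0_mem (by omega) (Nat.zero_le b))
  · exact mem_basisSpan_of_mem (mono_mem_of_le mono_13_2_mem (by omega) le_rfl)

theorem mono_mem_basisSpan_of_le_four {a b : ℕ} (hb : b ≤ 4) : mono a b ∈ basisSpan := by
  rcases Nat.lt_or_ge b 3 with hb' | hb'
  · exact mono_mem_basisSpan_of_le_two (by omega)
  rcases Nat.lt_or_ge a 6 with ha | ha
  · exact mono_mem_basisSpan_of_mem (mem_basisIndex.mpr (by omega))
  obtain ⟨a, rfl⟩ := Nat.exists_eq_add_of_le' ha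
  obtain ⟨b, rfl⟩ := Nat.exists_eq_add_of_le' hb'
  have key : 7 * mono (a + 6) (b + 3) = mono a b * pder 0 fEx - 10 * mono (a + 9) (b + 3)
      - 17 * mono (a + 16) b := by
    rw [pder_zero_fEx]; simp only [mono]; ring
  rw [← ofNat_mul_mem_basisSpan_iff 7, key]
  refine sub_mem (sub_mem (mem_basisSpan_of_mem (Ideal.mul_mem_left _ _ pder_zero_fEx_mem))
    (mem_basisSpan_of_mem ?_)) ((ofNat_mul_mem_basisSpan_iff 17).mpr ?_)
  · exact Ideal.mul_mem_left _ _ (mono_mem_of_le mono_7_3_mem (by omega) (by omega))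
  · exact mono_mem_basisSpan_of_le_two (by omega)

theorem mono_mem_basisSpan (a b : ℕ) : mono a b ∈ basisSpan := by
  rcases Nat.lt_or_ge b 5 with hb | hb
  · exact mono_mem_basisSpan_of_le_four (by omega)
  obtain rfl | hb := eq_or_lt_of_le hb
  · have key : 6 * mono a 5 =
        mono a 0 * pder 1 fEx - 3 * mono (a + 7) 2 - 3 * mono (a + 10) 2 := by
      rw [pder_one_fEx]; simp only [mono]; ring
    rw [← ofNat_mul_mem_basisSpan_iff 6, key]
    refine sub_mem (sub_mem (mem_basisSpan_of_mem (Ideal.mul_mem_left _ _ pder_one_fEx_mem))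
      ((ofNat_mul_mem_basisSpan_iff 3).mpr ?_)) ((ofNat_mul_mem_basisSpan_iff 3).mpr ?_) <;>
    exact mono_mem_basisSpan_of_le_two le_rfl
  · exact mem_basisSpan_of_mem (mono_mem_of_le mono_0_6_mem (Nat.zero_le a) hb)

theorem mem_basisSpan (z : R2) : z ∈ basisSpan := by
  let n : Fin 2 →₀ ℕ := Finsupp.single 0 16 + Finsupp.single 1 5
  have hJ : ∀ i, X i ^ (n i + 1) ∈ J := by
    simpa [n, Fin.forall_fin_two, mono] using And.intro mono_17_0_mem mono_0_6_mem
  have htrunc : (trunc' ℂ n z : R2) ∈ basisSpan :=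
    coe_mem_of_forall_monomial_mem (fun d => by
      rw [monomial_one_eq_mono]; exact mono_mem_basisSpan _ _) _
  simpa using add_mem (mem_basisSpan_of_mem (sub_trunc'_mem n hJ z)) htrunc

theorem span_monomialClass : ⊤ ≤ Submodule.span ℂ (Set.range monomialClass) := by
  rintro q -
  obtain ⟨z, rfl⟩ := Ideal.Quotient.mk_surjective q
  exact mem_basisSpan z

/-- The coefficient of `x^a y^b`, extended by zero to negative exponents so that multiplying by
a monomial just shifts the indices. -/
def coeffInt (a b : ℤ) : R2 →ₗ[ℂ] ℂ :=
  if 0 ≤ a ∧ 0 ≤ b then coeff (Finsupp.single 0 a.toNat + Finsupp.single 1 b.toNat) else 0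

theorem coeffInt_of_neg {a b : ℤ} (h : a < 0 ∨ b < 0) (z : R2) : coeffInt a b z = 0 := by
  rw [coeffInt, if_neg (by omega), LinearMap.zero_apply]

theorem coeffInt_natCast (a b : ℕ) (z : R2) :
    coeffInt a b z = coeff (Finsupp.single 0 a + Finsupp.single 1 b) z := by
  simp [coeffInt]

theorem coeffInt_mono_mul (a b : ℤ) (u v : ℕ) (z : R2) :
    coeffInt a b (mono u v * z) = coeffInt (a - u) (b - v) z := by
  by_cases h : 0 ≤ a ∧ 0 ≤ b
  swap
  · rw [coeffInt_of_neg (by omega), coeffInt_of_neg (by omega)]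
  obtain ⟨a, rfl⟩ := Int.eq_ofNat_of_zero_le h.1
  obtain ⟨b, rfl⟩ := Int.eq_ofNat_of_zero_le h.2
  rw [coeffInt_natCast, mono_eq_monomial, coeff_monomial_mul, one_mul]
  split_ifs with hle
  · have hu : u ≤ a := by simpa using hle 0
    have hv : v ≤ b := by simpa using hle 1
    rw [← Nat.cast_sub hu, ← Nat.cast_sub hv, coeffInt_natCast]
    congr 2
    exact finsupp_fin_two_eq_iff.mpr ⟨by simp, by simp⟩
  · rw [coeffInt_of_neg]
    contrapose! hle
    intro i; fin_cases i <;> simp <;> omega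

theorem coeffInt_mono (a b : ℤ) (u v : ℕ) :
    coeffInt a b (mono u v) = if a = u ∧ b = v then 1 else 0 := by
  rw [← mul_one (mono u v), coeffInt_mono_mul]
  by_cases hn : a - u < 0 ∨ b - v < 0
  · rw [coeffInt_of_neg hn, if_neg (by omega)]
  obtain ⟨c, hc⟩ := Int.eq_ofNat_of_zero_le (show 0 ≤ a - u by omega)
  obtain ⟨d, hd⟩ := Int.eq_ofNat_of_zero_le (show 0 ≤ b - v by omega)
  rw [hc, hd, coeffInt_natCast, coeff_one]
  simp only [finsupp_fin_two_eq_iff, Finsupp.add_apply, Finsupp.single_apply, Finsupp.coe_zero,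
    Pi.zero_apply]
  split_ifs <;> first | rfl | omega

theorem coeffInt_ofNat_mul (a b : ℤ) (n : ℕ) [n.AtLeastTwo] (z : R2) :
    coeffInt a b (OfNat.ofNat n * z) = OfNat.ofNat n * coeffInt a b z := by
  rw [← map_ofNat C, ← smul_eq_C_mul, map_smul, smul_eq_mul]

theorem coeffInt_mul_fEx (a b : ℤ) (p : R2) : coeffInt a b (p * fEx) =
    coeffInt a (b - 6) p + coeffInt (a - 7) (b - 3) p + coeffInt (a - 10) (b - 3) p
      + coeffInt (a - 17) b p := by
  rw [fEx_eq, show p * (mono 0 6 + mono 7 3 + mono 10 3 + mono 17 0) =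
    mono 0 6 * p + mono 7 3 * p + mono 10 3 * p + mono 17 0 * p by ring]
  simp only [map_add, coeffInt_mono_mul]
  norm_num

theorem coeffInt_mul_pder_zero_fEx (a b : ℤ) (p : R2) : coeffInt a b (p * pder 0 fEx) =
    7 * coeffInt (a - 6) (b - 3) p + 10 * coeffInt (a - 9) (b - 3) p
      + 17 * coeffInt (a - 16) b p := by
  rw [pder_zero_fEx, show p * (7 * mono 6 3 + 10 * mono 9 3 + 17 * mono 16 0) =
    7 * (mono 6 3 * p) + 10 * (mono 9 3 * p) + 17 * (mono 16 0 * p) by ring]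
  rw [map_add, map_add, coeffInt_ofNat_mul, coeffInt_ofNat_mul, coeffInt_ofNat_mul]
  simp only [coeffInt_mono_mul]
  norm_num

theorem coeffInt_mul_pder_one_fEx (a b : ℤ) (p : R2) : coeffInt a b (p * pder 1 fEx) =
    6 * coeffInt a (b - 5) p + 3 * coeffInt (a - 7) (b - 2) p
      + 3 * coeffInt (a - 10) (b - 2) p := by
  rw [pder_one_fEx, show p * (6 * mono 0 5 + 3 * mono 7 2 + 3 * mono 10 2) =
    6 * (mono 0 5 * p) + 3 * (mono 7 2 * p) + 3 * (mono 10 2 * p) by ring]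
  rw [map_add, map_add, coeffInt_ofNat_mul, coeffInt_ofNat_mul, coeffInt_ofNat_mul]
  simp only [coeffInt_mono_mul]
  norm_num

/-- `dualCoeff (a, b)` is the coefficient of `x^a y^b` in the normal form modulo `J`, where
`x^c y⁵ ≡ -(x^(c+7) y² + x^(c+10) y²)/2` and `x⁶ y^(b+3) ≡ -(17/7) x¹⁶ y^b`. -/
def dualCoeff (q : ℕ × ℕ) : R2 →ₗ[ℂ] ℂ :=
  coeffInt q.1 q.2
    - (if q.2 = 2 then (2⁻¹ : ℂ) • (coeffInt ((q.1 : ℤ) - 7) 5 + coeffInt ((q.1 : ℤ) - 10) 5)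
      else 0)
    - (if q.1 = 16 then (17 / 7 : ℂ) • coeffInt 6 ((q.2 : ℤ) + 3) else 0)

theorem dualCoeff_apply (a b : ℕ) (z : R2) : dualCoeff (a, b) z = coeffInt a b z
    - (if b = 2 then 2⁻¹ * (coeffInt ((a : ℤ) - 7) 5 z + coeffInt ((a : ℤ) - 10) 5 z) else 0)
    - (if a = 16 then 17 / 7 * coeffInt 6 ((b : ℤ) + 3) z else 0) := by
  simp only [dualCoeff, LinearMap.sub_apply, apply_ite (fun f : R2 →ₗ[ℂ] ℂ => f z),
    LinearMap.smul_apply, LinearMap.add_apply, LinearMap.zero_apply, smul_eq_mul]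

theorem dualCoeff_mul_eq_zero {q : ℕ × ℕ} (hq : q ∈ basisIndex) {g : R2}
    (hg : g ∈ ({fEx, pder 0 fEx, pder 1 fEx} : Set R2)) (p : R2) : dualCoeff q (p * g) = 0 := by
  obtain ⟨a, b⟩ := q
  rw [mem_basisIndex] at hq
  rw [dualCoeff_apply]
  -- after expanding, every shifted coefficient that does not cancel has a negative index
  rcases hg with rfl | rfl | rfl <;>
  simp only [coeffInt_mul_fEx, coeffInt_mul_pder_zero_fEx, coeffInt_mul_pder_one_fEx] <;>
  split_ifs <;>
  simp (disch := omega) only [coeffInt_of_neg] <;>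
  subst_vars <;> norm_num <;> ring

theorem dualCoeff_eq_zero_of_mem {q : ℕ × ℕ} (hq : q ∈ basisIndex) {z : R2} (hz : z ∈ J) :
    dualCoeff q z = 0 :=
  (dualCoeff q).map_eq_zero_of_mem_ideal_span (fun _ hg => dualCoeff_mul_eq_zero hq hg) hz

theorem dualCoeff_mono {q r : ℕ × ℕ} (hq : q ∈ basisIndex) (hr : r ∈ basisIndex) :
    dualCoeff q (mono r.1 r.2) = if r = q then 1 else 0 := by
  obtain ⟨a, b⟩ := q
  obtain ⟨c, d⟩ := r
  rw [mem_basisIndex] at hq hr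
  simp only [dualCoeff_apply, coeffInt_mono, Prod.mk.injEq]
  split_ifs <;> simp_all <;> omega

theorem linearIndependent_monomialClass : LinearIndependent ℂ monomialClass := by
  rw [Fintype.linearIndependent_iff]
  intro c hc q
  have hmem : ∑ r, c r • mono r.1.1 r.1.2 ∈ J := by
    rw [← Ideal.Quotient.eq_zero_iff_mem, ← Ideal.Quotient.mkₐ_eq_mk ℂ, map_sum]
    simpa only [map_smul, monomialClass] using hc
  have hdual := dualCoeff_eq_zero_of_mem q.2 hmem
  rw [map_sum, Finset.sum_eq_single q] at hdual
  · simpa [dualCoeff_mono q.2 q.2] using hdual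
  · intro r _ hrq
    rw [map_smul, dualCoeff_mono q.2 r.2, if_neg (Subtype.coe_injective.ne hrq), smul_zero]
  · simp

end Tjurina

/-- The Tjurina number of f = (y³+x⁷)(y³+x¹⁰) equals 59. -/
theorem tjurina_number_example :
    Module.finrank ℂ (R2 ⧸ Ideal.span {fEx, pder 0 fEx, pder 1 fEx}) = 59 := by
  change Module.finrank ℂ (R2 ⧸ Tjurina.tjurinaIdeal) = 59
  rw [Module.finrank_eq_card_basis (Module.Basis.mk Tjurina.linearIndependent_monomialClass
    Tjurina.span_monomialClass), Fintype.card_coe, Tjurina.card_basisIndex]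
end
end

section
/- For f = (y³+x⁷)(y³+x¹⁰), the dimension of the quotient ℂ-vector space I^es(f)/⟨f, j(f)⟩ equals 7, where I^es(f) is the ideal generated by j(f) together with all monomials x^α y^β of Newton order ≥ 1 with respect to the Newton diagram of f (the diagram with faces given by the affine functionals n₁ = β + (3/10)α − 51/10 and n₂ = β + (3/7)α − 6, a monomial having Newton order ≥ 1 iff min(n₁(α,β), n₂(α,β)) ≥ 0). -/
noncomputable section

/-- A monomial x^α y^β has Newton order ≥ 1 for f = (y³+x⁷)(y³+x¹⁰) iff
min(β + (3/10)α − 51/10, β + (3/7)α − 6) ≥ 0. -/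
def newtonOrderGeOne (a b : ℕ) : Prop :=
  0 ≤ min ((b : ℚ) + 3/10 * a - 51/10) ((b : ℚ) + 3/7 * a - 6)

/-- The equisingularity ideal I^es(f) = ⟨j(f)⟩ + ⟨monomials of Newton order ≥ 1⟩. -/
def IesEx : Ideal R2 :=
  Ideal.span {pder 0 fEx, pder 1 fEx} ⊔
    Ideal.span {g : R2 | ∃ a b : ℕ, newtonOrderGeOne a b ∧
      g = MvPowerSeries.X 0 ^ a * MvPowerSeries.X 1 ^ b}

/-!
Write `T = ⟨f, f_x, f_y⟩`. Explicit relations `m * w = a f + b f_x + c f_y` with units `w` show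
`y⁶, x¹⁷, x⁶y⁵, x⁷y³, x¹³y² ∈ T` and `x¹¹y² ≡ -2x⁴y⁵`, `17x¹⁶y ≡ -7x⁶y⁴ (mod T)`. Hence every
monomial of Newton order `≥ 1` lies in `T + span{x³y⁵, x⁴y⁵, x⁵y⁴, x⁵y⁵, x⁶y⁴, x¹⁴y, x¹⁵y}`, and
since `x¹⁷, y⁶ ∈ T` only the truncation of a power series to exponents `< (17, 6)` matters, so
this subspace also absorbs all multiples of such monomials: the seven monomials span `I^es / T`.
They are independent modulo `T` because seven explicit combinations of coefficients vanish on `T`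
(each is annihilated by contraction with `f`, `f_x`, `f_y`) and are dual to them.
-/

open MvPowerSeries Finsupp

theorem MvPowerSeries.mem_span_X_pow_pair_of_coeff_eq_zero {σ R : Type*} [CommRing R] (i j : σ)
    (p q : ℕ) (φ : MvPowerSeries σ R) (h : ∀ m : σ →₀ ℕ, m i < p → m j < q → coeff m φ = 0) :
    φ ∈ Ideal.span {X i ^ p, X j ^ q} := by
  classical
  set ψ : MvPowerSeries σ R := fun m => if m j < q then coeff m φ else 0
  have hψ : X i ^ p ∣ ψ := X_pow_dvd_iff.2 fun m hm => by
    change ite _ _ _ = _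
    split_ifs with hq
    exacts [h m hm hq, rfl]
  have hφψ : X j ^ q ∣ φ - ψ := X_pow_dvd_iff.2 fun m hm => by
    change coeff m φ - ite _ _ _ = 0
    rw [if_pos hm, sub_self]
  obtain ⟨a, ha⟩ := hψ
  obtain ⟨b, hb⟩ := hφψ
  rw [Ideal.mem_span_pair]
  exact ⟨a, b, by rw [mul_comm a, mul_comm b, ← ha, ← hb, add_sub_cancel]⟩

theorem linearIndependent_quotient_mk_comp {K R M ι : Type*} [Field K] [CommRing R]
    [Algebra K R] [AddCommGroup M] [Module K M] [Fintype ι] {I : Ideal R} {v : ι → R}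
    (Λ : R →ₗ[K] M)
    (hI : ∀ x ∈ I, Λ x = 0) (hv : LinearIndependent K (Λ ∘ v)) :
    LinearIndependent K (Ideal.Quotient.mk I ∘ v) := by
  rw [Fintype.linearIndependent_iff] at hv ⊢
  intro g hg
  apply hv g
  have hmem : ∑ i, g i • v i ∈ I := by
    rw [← Ideal.Quotient.eq_zero_iff_mem, ← Ideal.Quotient.mkₐ_eq_mk K, map_sum]
    simpa [map_smul] using hg
  simpa [map_sum, map_smul] using hI _ hmem

theorem finrank_map_quotient_mk_eq_card {K R ι : Type*} [Field K] [CommRing R] [Algebra K R]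
    [Fintype ι] {A B : Ideal R} {v : ι → R}
    (hB : B.restrictScalars K ≤ A.restrictScalars K ⊔ Submodule.span K (Set.range v))
    (hv : ∀ i, v i ∈ B) (hli : LinearIndependent K (Ideal.Quotient.mk A ∘ v)) :
    Module.finrank K ((B.map (Ideal.Quotient.mk A)).restrictScalars K) = Fintype.card ι := by
  suffices h : (B.map (Ideal.Quotient.mk A)).restrictScalars K
      = Submodule.span K (Set.range (Ideal.Quotient.mk A ∘ v)) by
    rw [h, finrank_span_eq_card hli]
  apply le_antisymm
  · intro x hx
    obtain ⟨y, hy, rfl⟩ := (Ideal.mem_map_iff_of_surjective _ Ideal.Quotient.mk_surjective).1 hx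
    obtain ⟨a, ha, z, hz, rfl⟩ := Submodule.mem_sup.1 (hB hy)
    rw [map_add, Ideal.Quotient.eq_zero_iff_mem.2 ha, zero_add, ← Ideal.Quotient.mkₐ_eq_mk K,
      Set.range_comp]
    simpa [Submodule.map_span] using
      Submodule.mem_map_of_mem (f := (Ideal.Quotient.mkₐ K A).toLinearMap) hz
  · rw [Submodule.span_le]
    rintro _ ⟨i, rfl⟩
    exact Ideal.mem_map_of_mem _ (hv i)

def exps (a b : ℕ) : Fin 2 →₀ ℕ := single 0 a + single 1 b

def mono (a b : ℕ) : R2 := X 0 ^ a * X 1 ^ b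

@[simp] lemma exps_apply_zero (a b : ℕ) : exps a b 0 = a := by simp [exps]
@[simp] lemma exps_apply_one (a b : ℕ) : exps a b 1 = b := by simp [exps]

lemma exps_apply_self (d : Fin 2 →₀ ℕ) : exps (d 0) (d 1) = d := by
  ext i; fin_cases i <;> simp

@[simp] lemma exps_inj {a b c d : ℕ} : exps a b = exps c d ↔ a = c ∧ b = d := by
  refine ⟨fun h => ⟨by simpa using congr($h 0), by simpa using congr($h 1)⟩, ?_⟩
  rintro ⟨rfl, rfl⟩; rfl

@[simp] lemma exps_le_exps {a b c d : ℕ} : exps a b ≤ exps c d ↔ a ≤ c ∧ b ≤ d := by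
  simp [Finsupp.le_def, Fin.forall_fin_two]

@[simp] lemma exps_sub_exps (a b c d : ℕ) : exps c d - exps a b = exps (c - a) (d - b) := by
  ext i; fin_cases i <;> simp

lemma mono_eq_monomial (a b : ℕ) : mono a b = monomial (exps a b) 1 := by
  rw [mono, X_pow_eq, X_pow_eq, monomial_mul_monomial, one_mul, exps]

lemma mono_mul_mono (a b c d : ℕ) : mono a b * mono c d = mono (a + c) (b + d) := by
  simp only [mono]; ring

lemma monomial_eq_smul_mono (d : Fin 2 →₀ ℕ) (c : ℂ) : monomial d c = c • mono (d 0) (d 1) := by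
  rw [mono_eq_monomial, exps_apply_self, ← map_smul, smul_eq_mul, mul_one]

@[simp] lemma coeff_mul_mono (r : R2) (a b c d : ℕ) :
    coeff (exps c d) (r * mono a b) =
      if a ≤ c ∧ b ≤ d then coeff (exps (c - a) (d - b)) r else 0 := by
  simp [mono_eq_monomial, coeff_mul_monomial]

lemma fEx_eq : fEx = mono 0 6 + mono 7 3 + mono 10 3 + mono 17 0 := by
  simp only [fEx, mono]; ring

lemma pder_eq_pderiv (i : Fin 2) (f : R2) : pder i f = pderiv ℂ i f := by
  ext d; rw [coeff_pderiv, mul_comm]; rfl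

lemma pder_zero_fEx : pder 0 fEx = 7 * mono 6 3 + 10 * mono 9 3 + 17 * mono 16 0 := by
  simp only [pder_eq_pderiv, fEx, mono, Derivation.leibniz, Derivation.leibniz_pow, map_add,
    pderiv_X_self, pderiv_X_of_ne (show (1 : Fin 2) ≠ 0 by decide), smul_eq_mul, nsmul_eq_mul]
  ring

lemma pder_one_fEx : pder 1 fEx = 6 * mono 0 5 + 3 * mono 7 2 + 3 * mono 10 2 := by
  simp only [pder_eq_pderiv, fEx, mono, Derivation.leibniz, Derivation.leibniz_pow, map_add,
    pderiv_X_self, pderiv_X_of_ne (show (0 : Fin 2) ≠ 1 by decide), smul_eq_mul, nsmul_eq_mul]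
  ring

def tjurinaEx : Ideal R2 := Ideal.span {fEx, pder 0 fEx, pder 1 fEx}

lemma mem_tjurinaEx_of_mul_eq {m w : R2} (a b c : R2) (hw : constantCoeff w ≠ 0)
    (h : m * w = a * fEx + b * pder 0 fEx + c * pder 1 fEx) : m ∈ tjurinaEx := by
  rw [← Ideal.mul_unit_mem_iff_mem _ (isUnit_iff_constantCoeff.2 hw.isUnit), h]
  refine add_mem (add_mem ?_ ?_) ?_ <;> exact Ideal.mul_mem_left _ _ (Ideal.subset_span (by simp))

lemma mono_zero_six_mem : mono 0 6 ∈ tjurinaEx :=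
  mem_tjurinaEx_of_mul_eq (w := 63 + 27 * X 0 ^ 3 - 90 * X 0 ^ 6)
    (-357 - 867 * X 0 ^ 3 - 510 * X 0 ^ 6) (21 * X 0 + 51 * X 0 ^ 4 + 30 * X 0 ^ 7)
    (70 * X 1 + 149 * X 0 ^ 3 * X 1 + 70 * X 0 ^ 6 * X 1) (by simp [← map_ofNat C]) (by
      rw [pder_zero_fEx, pder_one_fEx]; simp only [fEx, mono]; ring)

lemma mono_six_five_mem : mono 6 5 ∈ tjurinaEx :=
  mem_tjurinaEx_of_mul_eq (w := 21 - 51 * X 0 ^ 3 + 30 * X 0 ^ 6)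
    0 (3 * X 1 ^ 2 + 3 * X 0 ^ 3 * X 1 ^ 2) (-17 * X 0 ^ 9) (by simp [← map_ofNat C]) (by
      rw [pder_zero_fEx, pder_one_fEx]; simp only [fEx, mono]; ring)

lemma mono_seven_three_mem : mono 7 3 ∈ tjurinaEx :=
  mem_tjurinaEx_of_mul_eq (w := 63 + 27 * X 0 ^ 3 - 90 * X 0 ^ 6)
    (714 + 1020 * X 0 ^ 3) (-42 * X 0 - 60 * X 0 ^ 4) (-119 * X 1 - 170 * X 0 ^ 3 * X 1)
    (by simp [← map_ofNat C]) (by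
      rw [pder_zero_fEx, pder_one_fEx]; simp only [fEx, mono]; ring)

lemma mono_thirteen_two_mem : mono 13 2 ∈ tjurinaEx :=
  mem_tjurinaEx_of_mul_eq
    (w := 1029 - 6000 * X 0 ^ 2 * X 1 ^ 3 - 3969 * X 0 ^ 3 + 7140 * X 0 ^ 6 - 10200 * X 0 ^ 9)
    0 (-294 * X 1 ^ 2 + 420 * X 0 ^ 3 * X 1 ^ 2 - 600 * X 0 ^ 6 * X 1 ^ 2) (343 * X 0 ^ 6)
    (by simp [← map_ofNat C]) (by
      rw [pder_zero_fEx, pder_one_fEx]; simp only [fEx, mono]; ring)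

lemma mono_seventeen_zero_mem : mono 17 0 ∈ tjurinaEx :=
  mem_tjurinaEx_of_mul_eq (w := 9 - 9 * X 0 ^ 3)
    (-42 - 60 * X 0 ^ 3) (3 * X 0 + 3 * X 0 ^ 4) (7 * X 1 + 10 * X 0 ^ 3 * X 1)
    (by simp [← map_ofNat C]) (by
      rw [pder_zero_fEx, pder_one_fEx]; simp only [fEx, mono]; ring)

lemma mono_eleven_two_add_mem : mono 11 2 + 2 * mono 4 5 ∈ tjurinaEx :=
  mem_tjurinaEx_of_mul_eq (w := 147 - 567 * X 0 ^ 3 + 720 * X 0 ^ 6 - 300 * X 0 ^ 9)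
    0 (42 * X 0 * X 1 ^ 2 - 60 * X 0 ^ 4 * X 1 ^ 2) (49 * X 0 ^ 4 - 238 * X 0 ^ 7 + 240 * X 0 ^ 10)
    (by simp [← map_ofNat C]) (by
      rw [pder_zero_fEx, pder_one_fEx]; simp only [fEx, mono]; ring)

lemma mono_sixteen_one_add_mem : 17 * mono 16 1 + 7 * mono 6 4 ∈ tjurinaEx :=
  mem_tjurinaEx_of_mul_eq (w := 63 + 27 * X 0 ^ 3 - 90 * X 0 ^ 6)
    (-7140 * X 0 ^ 2 * X 1 - 10200 * X 0 ^ 5 * X 1)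
    (63 * X 1 + 447 * X 0 ^ 3 * X 1 + 510 * X 0 ^ 6 * X 1)
    (1190 * X 0 ^ 2 * X 1 ^ 2 + 1700 * X 0 ^ 5 * X 1 ^ 2) (by simp [← map_ofNat C]) (by
      rw [pder_zero_fEx, pder_one_fEx]; simp only [fEx, mono]; ring)

def esBasis : Fin 7 → R2 :=
  ![mono 3 5, mono 4 5, mono 5 4, mono 5 5, mono 6 4, mono 14 1, mono 15 1]

def esSpan : Submodule ℂ R2 := tjurinaEx.restrictScalars ℂ ⊔ Submodule.span ℂ (Set.range esBasis)

lemma mem_esSpan_of_mem_tjurinaEx {g : R2} (h : g ∈ tjurinaEx) : g ∈ esSpan :=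
  Submodule.mem_sup_left h

lemma esBasis_mem_esSpan (i : Fin 7) : esBasis i ∈ esSpan :=
  Submodule.mem_sup_right (Submodule.subset_span ⟨i, rfl⟩)

lemma mem_esSpan_of_smul_add_smul_mem {g : R2} {c : ℂ} (d : ℂ) (i : Fin 7) (hc : c ≠ 0)
    (h : c • g + d • esBasis i ∈ tjurinaEx) : g ∈ esSpan := by
  rw [← Submodule.smul_mem_iff _ hc, ← add_sub_cancel_right (c • g) (d • esBasis i)]
  exact sub_mem (mem_esSpan_of_mem_tjurinaEx h) (Submodule.smul_mem _ d (esBasis_mem_esSpan i))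

lemma mono_mem_tjurinaEx_of_le {a b c d : ℕ} (h : mono a b ∈ tjurinaEx) (hac : a ≤ c)
    (hbd : b ≤ d) : mono c d ∈ tjurinaEx := by
  rw [← Nat.sub_add_cancel hac, ← Nat.sub_add_cancel hbd, ← mono_mul_mono]
  exact Ideal.mul_mem_left _ _ h

lemma newtonOrderGeOne_iff {a b : ℕ} :
    newtonOrderGeOne a b ↔ 51 ≤ 3 * a + 10 * b ∧ 42 ≤ 3 * a + 7 * b := by
  rw [newtonOrderGeOne, le_min_iff]
  constructor
  · rintro ⟨h₁, h₂⟩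
    constructor <;> (rw [← Nat.cast_le (α := ℚ)]; push_cast; linarith)
  · rintro ⟨h₁, h₂⟩
    have h₁' : (51 : ℚ) ≤ 3 * a + 10 * b := by exact_mod_cast h₁
    have h₂' : (42 : ℚ) ≤ 3 * a + 7 * b := by exact_mod_cast h₂
    constructor <;> linarith

lemma newtonOrderGeOne.add {a b : ℕ} (h : newtonOrderGeOne a b) (c d : ℕ) :
    newtonOrderGeOne (a + c) (b + d) := by
  rw [newtonOrderGeOne_iff] at h ⊢
  omega

lemma newtonOrderGeOne_cases {a b : ℕ} (h : newtonOrderGeOne a b) :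
    6 ≤ b ∨ 17 ≤ a ∨ (6 ≤ a ∧ 5 ≤ b) ∨ (7 ≤ a ∧ 3 ≤ b) ∨ (13 ≤ a ∧ 2 ≤ b) ∨
      (a = 3 ∧ b = 5) ∨ (a = 4 ∧ b = 5) ∨ (a = 5 ∧ b = 4) ∨ (a = 5 ∧ b = 5) ∨ (a = 6 ∧ b = 4) ∨
      (a = 14 ∧ b = 1) ∨ (a = 15 ∧ b = 1) ∨ (a = 11 ∧ b = 2) ∨ (a = 12 ∧ b = 2) ∨
      (a = 16 ∧ b = 1) := by
  rw [newtonOrderGeOne_iff] at h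
  obtain hb | hb := le_or_gt 6 b
  · exact Or.inl hb
  obtain ha | ha := le_or_gt 17 a
  · exact Or.inr (Or.inl ha)
  interval_cases b <;> interval_cases a <;> simp_all

lemma mono_mem_esSpan {a b : ℕ} (h : newtonOrderGeOne a b) : mono a b ∈ esSpan := by
  rcases newtonOrderGeOne_cases h with hb | ha | ⟨ha, hb⟩ | ⟨ha, hb⟩ | ⟨ha, hb⟩ | ⟨rfl, rfl⟩ |
    ⟨rfl, rfl⟩ | ⟨rfl, rfl⟩ | ⟨rfl, rfl⟩ | ⟨rfl, rfl⟩ | ⟨rfl, rfl⟩ | ⟨rfl, rfl⟩ | ⟨rfl, rfl⟩ |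
    ⟨rfl, rfl⟩ | ⟨rfl, rfl⟩
  · exact mem_esSpan_of_mem_tjurinaEx (mono_mem_tjurinaEx_of_le mono_zero_six_mem a.zero_le hb)
  · exact mem_esSpan_of_mem_tjurinaEx
      (mono_mem_tjurinaEx_of_le mono_seventeen_zero_mem ha b.zero_le)
  · exact mem_esSpan_of_mem_tjurinaEx (mono_mem_tjurinaEx_of_le mono_six_five_mem ha hb)
  · exact mem_esSpan_of_mem_tjurinaEx (mono_mem_tjurinaEx_of_le mono_seven_three_mem ha hb)
  · exact mem_esSpan_of_mem_tjurinaEx (mono_mem_tjurinaEx_of_le mono_thirteen_two_mem ha hb)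
  · exact esBasis_mem_esSpan 0
  · exact esBasis_mem_esSpan 1
  · exact esBasis_mem_esSpan 2
  · exact esBasis_mem_esSpan 3
  · exact esBasis_mem_esSpan 4
  · exact esBasis_mem_esSpan 5
  · exact esBasis_mem_esSpan 6
  · exact mem_esSpan_of_smul_add_smul_mem 2 1 one_ne_zero
      (by simpa [smul_eq_C_mul, esBasis, ← map_ofNat C] using mono_eleven_two_add_mem)
  · have h := Ideal.mul_mem_left _ (mono 1 0) mono_eleven_two_add_mem
    rw [mul_add, mul_left_comm, mono_mul_mono, mono_mul_mono] at h
    exact mem_esSpan_of_smul_add_smul_mem 2 3 one_ne_zero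
      (by simpa [smul_eq_C_mul, esBasis, ← map_ofNat C] using h)
  · exact mem_esSpan_of_smul_add_smul_mem 7 4 (by norm_num : (17 : ℂ) ≠ 0)
      (by simpa [smul_eq_C_mul, esBasis, ← map_ofNat C] using mono_sixteen_one_add_mem)

lemma mul_mono_mem_esSpan (r : R2) {a b : ℕ} (h : newtonOrderGeOne a b) :
    r * mono a b ∈ esSpan := by
  set p := trunc' ℂ (exps 16 5) r
  have htail : r - p ∈ tjurinaEx := by
    refine Ideal.span_le.2 ?_ (mem_span_X_pow_pair_of_coeff_eq_zero 0 1 17 6 _ fun m h₀ h₁ => ?_)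
    · rintro _ (rfl | rfl)
      · simpa [mono] using mono_seventeen_zero_mem
      · simpa [mono] using mono_zero_six_mem
    · rw [map_sub, MvPolynomial.coeff_coe, coeff_trunc', if_pos, sub_self]
      rw [← exps_apply_self m, exps_le_exps]
      omega
  have hpoly : (p : R2) * mono a b ∈ esSpan := by
    induction p using MvPolynomial.induction_on' with
    | monomial d c =>
      rw [MvPolynomial.coe_monomial, monomial_eq_smul_mono, smul_mul_assoc, mono_mul_mono,
        add_comm, add_comm (d 1)]
      exact Submodule.smul_mem _ c (mono_mem_esSpan (h.add _ _))
    | add p q hp hq => rw [MvPolynomial.coe_add, add_mul]; exact add_mem hp hq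
  rw [← sub_add_cancel r p, add_mul]
  exact add_mem (mem_esSpan_of_mem_tjurinaEx (Ideal.mul_mem_right _ _ htail)) hpoly

lemma IesEx_le_esSpan : IesEx.restrictScalars ℂ ≤ esSpan := by
  intro g hg
  obtain ⟨j, hj, n, hn, rfl⟩ := Submodule.mem_sup.1 hg
  clear hg
  refine add_mem (mem_esSpan_of_mem_tjurinaEx (Ideal.span_mono (Set.subset_insert _ _) hj)) ?_
  suffices ∀ r, r * n ∈ esSpan by simpa using this 1
  induction hn using Submodule.span_induction with
  | mem _ hm =>
    obtain ⟨a, b, hab, rfl⟩ := hm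
    exact fun r => mul_mono_mem_esSpan r hab
  | zero => simp
  | add _ _ _ _ hx hy => exact fun r => by rw [mul_add]; exact add_mem (hx r) (hy r)
  | smul s _ _ hx => exact fun r => by rw [smul_eq_mul, ← mul_assoc]; exact hx (r * s)

lemma esBasis_mem_IesEx (i : Fin 7) : esBasis i ∈ IesEx := by
  refine Submodule.mem_sup_right (Ideal.subset_span ?_)
  fin_cases i <;> exact ⟨_, _, by simp [newtonOrderGeOne_iff], rfl⟩

def esDual : R2 →ₗ[ℂ] Fin 7 → ℂ := LinearMap.pi ![
  coeff (exps 0 5) + coeff (exps 3 5) - 2 • coeff (exps 10 2),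
  coeff (exps 1 5) + coeff (exps 4 5) - 2 • coeff (exps 11 2),
  coeff (exps 5 4),
  coeff (exps 2 5) + coeff (exps 5 5) - 2 • coeff (exps 12 2),
  coeff (exps 6 4) - (7 / 17 : ℂ) • coeff (exps 16 1),
  coeff (exps 14 1),
  coeff (exps 15 1)]

lemma esDual_mul_fEx (r : R2) : esDual (r * fEx) = 0 := by
  ext i
  fin_cases i <;> simp [esDual, fEx_eq, mul_add]

lemma esDual_mul_pder_zero_fEx (r : R2) : esDual (r * pder 0 fEx) = 0 := by
  ext i
  fin_cases i <;>
    simp [esDual, pder_zero_fEx, mul_add, mul_left_comm r, ← map_ofNat C, coeff_C_mul]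
  ring

lemma esDual_mul_pder_one_fEx (r : R2) : esDual (r * pder 1 fEx) = 0 := by
  ext i
  fin_cases i <;>
    simp [esDual, pder_one_fEx, mul_add, mul_left_comm r, ← map_ofNat C, coeff_C_mul] <;> ring

lemma esDual_esBasis (i : Fin 7) : esDual (esBasis i) = Pi.basisFun ℂ (Fin 7) i := by
  ext j
  fin_cases i <;> fin_cases j <;> simp [esDual, esBasis, mono_eq_monomial, coeff_monomial]

lemma esDual_eq_zero_of_mem {g : R2} (hg : g ∈ tjurinaEx) : esDual g = 0 := by
  obtain ⟨a, g', hg', rfl⟩ := Ideal.mem_span_insert.1 hg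
  obtain ⟨b, c, rfl⟩ := Ideal.mem_span_pair.1 hg'
  simp only [map_add, esDual_mul_fEx, esDual_mul_pder_zero_fEx, esDual_mul_pder_one_fEx,
    add_zero]

lemma linearIndependent_esBasis :
    LinearIndependent ℂ (Ideal.Quotient.mk tjurinaEx ∘ esBasis) :=
  linearIndependent_quotient_mk_comp esDual (fun _ => esDual_eq_zero_of_mem)
    (by rw [show esDual ∘ esBasis = _ from funext esDual_esBasis]
        exact (Pi.basisFun ℂ (Fin 7)).linearIndependent)

/-- dim_ℂ I^es(f)/⟨f, j(f)⟩ = 7 for f = (y³+x⁷)(y³+x¹⁰). -/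
theorem es_codim_example :
    qdim (Ideal.span {fEx, pder 0 fEx, pder 1 fEx}) IesEx = 7 :=
  (finrank_map_quotient_mk_eq_card IesEx_le_esSpan esBasis_mem_IesEx
    linearIndependent_esBasis).trans (Fintype.card_fin 7)
end
end
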